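/- arXiv:2503.09353 — 2 statements merged into one kernel-verified Lean document; each statement's English description precedes it below -/
import Mathlib

section
/- Validity of the coarse-grain-stencil frame for even dimensions: if d is even, then the family B(α) := (1/2)·Σ_{b∈{0,1}²} A(2α + b) for α ∈ (ZMod d)² is a valid PPO frame; that is, (A1) each B(α) is Hermitian, (A2) Tr(B(α)) = 1, (A3) Tr(B(α)†·B(β)) = d if α = β and 0 otherwise, and (A4) V(k)·B(α)·V(k)† = B(α + k) for all k ∈ ℤ² (α + k taken mod d). -/
open scoped BigOperators
open Matrix

noncomputable section

/-- `omega n a = exp(2πi a / n)`, the `n`-th roots of unity raised to integer power `a`. -/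
def omega (n : ℕ) (a : ℤ) : ℂ := Complex.exp (2 * Real.pi * Complex.I * a / n)

/-- `Zpow d k = Σ_j ω_d^(k·j) |j⟩⟨j|`, the `k`-th power of the clock operator. -/
def Zpow (d : ℕ) (k : ℤ) : Matrix (ZMod d) (ZMod d) ℂ :=
  Matrix.of fun i j => if i = j then omega d (k * (j.val : ℤ)) else 0

/-- `Xpow d k = Σ_j |j+k⟩⟨j|`, the `k`-th power of the shift operator. -/
def Xpow (d : ℕ) (k : ℤ) : Matrix (ZMod d) (ZMod d) ℂ :=
  Matrix.of fun i j => if i = j + (k : ZMod d) then 1 else 0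

/-- The Weyl–Heisenberg displacement operator `V(k) = ω_{2d}^{-k₁k₂} Z^{k₂} X^{k₁}` for `k ∈ ℤ²`. -/
def Vint (d : ℕ) [NeZero d] (k : ℤ × ℤ) : Matrix (ZMod d) (ZMod d) ℂ :=
  omega (2 * d) (-(k.1 * k.2)) • (Zpow d k.2 * Xpow d k.1)

/-- The WHDO on the doubled phase space `(ZMod (2d))²`. -/
def V (d : ℕ) [NeZero d] (m : ZMod (2 * d) × ZMod (2 * d)) : Matrix (ZMod d) (ZMod d) ℂ :=
  Vint d ((m.1.val : ℤ), (m.2.val : ℤ))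

/-- Discrete parity operator `R = Σ_j |-j⟩⟨j|`. -/
def R (d : ℕ) : Matrix (ZMod d) (ZMod d) ℂ :=
  Matrix.of fun i j => if i = -j then 1 else 0

/-- Doubled phase-point operator `A(m) = V(m)·R`. -/
def A (d : ℕ) [NeZero d] (m : ZMod (2 * d) × ZMod (2 * d)) : Matrix (ZMod d) (ZMod d) ℂ :=
  V d m * R d

variable (d : ℕ) [NeZero d]

/-- Doubled Wigner transform: `Wig[O](m) = (1/(2d)) Tr(A(m)† O)`. -/
def Wig (O : Matrix (ZMod d) (ZMod d) ℂ) (m : ZMod (2 * d) × ZMod (2 * d)) : ℂ :=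
  (1 / (2 * (d : ℂ))) * ((A d m)ᴴ * O).trace

/-- Doubled Weyl transform: `Op[f] = (1/2) Σ_m f(m) A(m)`. -/
def OpW (f : ZMod (2 * d) × ZMod (2 * d) → ℂ) : Matrix (ZMod d) (ZMod d) ℂ :=
  (1 / 2 : ℂ) • ∑ m : ZMod (2 * d) × ZMod (2 * d), f m • A d m

/-- The projector `P = Wig ∘ Op` on functions on the doubled phase space. -/
def P (f : ZMod (2 * d) × ZMod (2 * d) → ℂ) : ZMod (2 * d) × ZMod (2 * d) → ℂ :=
  Wig d (OpW d f)

/-- Inner product on functions on the doubled phase space. -/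
def ip (f g : ZMod (2 * d) × ZMod (2 * d) → ℂ) : ℂ :=
  ∑ m : ZMod (2 * d) × ZMod (2 * d), (starRingEnd ℂ) (f m) * g m

/-- Cross-correlation `(f ⋆ g)(m) = Σ_{m'} conj(f m') g(m'+m)`. -/
def crossCor (f g : ZMod (2 * d) × ZMod (2 * d) → ℂ) (m : ZMod (2 * d) × ZMod (2 * d)) : ℂ :=
  ∑ m' : ZMod (2 * d) × ZMod (2 * d), (starRingEnd ℂ) (f m') * g (m' + m)

/-- The doubling map `ZMod d → ZMod (2d)`, `a ↦ 2a`. -/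
def dbl (a : ZMod d) : ZMod (2 * d) := ((2 * a.val : ℕ) : ZMod (2 * d))

/-- The doubling map on the phase space. -/
def dbl2 (α : ZMod d × ZMod d) : ZMod (2 * d) × ZMod (2 * d) := (dbl d α.1, dbl d α.2)

/-- A stencil `M` is valid if its projection `M̄ = P M` is real-valued (M1),
sums to 1 (M2), and satisfies the autocorrelation condition (M3). -/
def IsValidStencil (M : ZMod (2 * d) × ZMod (2 * d) → ℂ) : Prop :=
  (∀ m, (starRingEnd ℂ) (P d M m) = P d M m) ∧
  (∑ m : ZMod (2 * d) × ZMod (2 * d), P d M m) = 1 ∧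
  (∀ α : ZMod d × ZMod d,
    crossCor d (P d M) (P d M) (dbl2 d α) = if α = 0 then 1 else 0)

/-- The `M`-PPO frame generated by a stencil `M`:
`A^M(α) = (1/2) Σ_{m'} M(m') A(m' + 2α)`. -/
def AM (M : ZMod (2 * d) × ZMod (2 * d) → ℂ) (α : ZMod d × ZMod d) :
    Matrix (ZMod d) (ZMod d) ℂ :=
  (1 / 2 : ℂ) • ∑ m' : ZMod (2 * d) × ZMod (2 * d), M m' • A d (m' + dbl2 d α)

/-- A family of phase-point operators on `(ZMod d)²` is a valid PPO frame if it is
Hermitian (A1), trace-1 (A2), orthogonal (A3), and WHDO-covariant (A4). -/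
def IsValidPPOFrame (B : ZMod d × ZMod d → Matrix (ZMod d) (ZMod d) ℂ) : Prop :=
  (∀ α, (B α)ᴴ = B α) ∧
  (∀ α, (B α).trace = 1) ∧
  (∀ α β, ((B α)ᴴ * B β).trace = if α = β then (d : ℂ) else 0) ∧
  (∀ (k : ℤ × ℤ) (α : ZMod d × ZMod d),
    Vint d k * B α * (Vint d k)ᴴ = B (α + ((k.1 : ZMod d), (k.2 : ZMod d))))

/-- The `M`-Wigner transform: `Wig^M[O](α) = (1/d) Tr(A^M(α)† O)`. -/
def WigM (M : ZMod (2 * d) × ZMod (2 * d) → ℂ) (O : Matrix (ZMod d) (ZMod d) ℂ)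
    (α : ZMod d × ZMod d) : ℂ :=
  (1 / (d : ℂ)) * ((AM d M α)ᴴ * O).trace

/-- The `M`-Weyl transform: `Op^M[f] = Σ_α f(α) A^M(α)`. -/
def OpM (M : ZMod (2 * d) × ZMod (2 * d) → ℂ) (f : ZMod d × ZMod d → ℂ) :
    Matrix (ZMod d) (ZMod d) ℂ :=
  ∑ α : ZMod d × ZMod d, f α • AM d M α

/-- The symplectic discrete Fourier transform. -/
def SDFT (f : ZMod (2 * d) × ZMod (2 * d) → ℂ) (m : ZMod (2 * d) × ZMod (2 * d)) : ℂ :=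
  (1 / (2 * (d : ℂ))) * ∑ m' : ZMod (2 * d) × ZMod (2 * d),
    omega (2 * d) (-((m.1.val : ℤ) * (m'.2.val : ℤ) - (m.2.val : ℤ) * (m'.1.val : ℤ))) * f m'


/-- Coarse-grain-stencil PPO frame: `B(α) = (1/2) Σ_{b∈{0,1}²} A(2α + b)`. -/
def Bcgs (α : ZMod d × ZMod d) : Matrix (ZMod d) (ZMod d) ℂ :=
  (1 / 2 : ℂ) • ∑ b : ZMod 2 × ZMod 2,
    A d (dbl d α.1 + (b.1.val : ZMod (2 * d)), dbl d α.2 + (b.2.val : ZMod (2 * d)))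

/-- Momentum basis state `|p⟩ = (1/√d) Σ_j ω_d^{p j} |j⟩`. -/
def pvec (p : ZMod d) : ZMod d → ℂ :=
  fun j => (1 / ((Real.sqrt d : ℝ) : ℂ)) * omega d ((p.val : ℤ) * (j.val : ℤ))

/-- One-dimensional Dirichlet kernel `K(m) = (1/d) Σ_{t=-(d-1)/2}^{(d-1)/2} ω_{2d}^{t m}`. -/
def Kdir (m : ZMod (2 * d)) : ℂ :=
  (1 / (d : ℂ)) * ∑ t ∈ Finset.Icc (-(((d : ℤ) - 1) / 2)) (((d : ℤ) - 1) / 2),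
    omega (2 * d) (t * (m.val : ℤ))

end


noncomputable section CGSAux

namespace CGS

open Finset

/-! ### omega lemmas -/

lemma omega_add (n : ℕ) (a b : ℤ) : omega n (a + b) = omega n a * omega n b := by
  unfold omega
  rw [← Complex.exp_add, ← add_div]
  push_cast
  ring_nf

lemma omega_zero (n : ℕ) : omega n 0 = 1 := by simp [omega]

lemma omega_nmul (n : ℕ) (t : ℤ) : omega n ((n : ℤ) * t) = 1 := by
  rcases Nat.eq_zero_or_pos n with h | h
  · subst h; simp [omega]
  · unfold omega
    have hn : (n : ℂ) ≠ 0 := by exact_mod_cast h.ne'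
    rw [show (2 * (Real.pi:ℂ) * Complex.I * ((n:ℤ) * t : ℤ) / n) = (t:ℤ) * (2 * (Real.pi:ℂ) * Complex.I) by push_cast; field_simp]
    exact Complex.exp_int_mul_two_pi_mul_I t

lemma star_omega (n : ℕ) (a : ℤ) : (starRingEnd ℂ) (omega n a) = omega n (-a) := by
  unfold omega
  rw [← Complex.exp_conj]
  congr 1
  simp [map_div₀, Complex.conj_I, map_ofNat]

lemma omega_pow (n : ℕ) (a : ℤ) (j : ℕ) : omega n a ^ j = omega n (a * j) := by
  unfold omega
  rw [← Complex.exp_nat_mul]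
  congr 1
  push_cast
  ring

lemma omega_zpow (n : ℕ) (a : ℤ) (j : ℤ) : omega n a ^ j = omega n (a * j) := by
  unfold omega
  rw [← Complex.exp_int_mul]
  congr 1
  push_cast
  ring

lemma omega_two_mul (d : ℕ) (a : ℤ) : omega d a = omega (2*d) (2*a) := by
  rcases Nat.eq_zero_or_pos d with h | h
  · subst h; simp [omega]
  · unfold omega
    congr 1
    have hd : (d : ℂ) ≠ 0 := by exact_mod_cast h.ne'
    push_cast
    field_simp

lemma omega_d_self (d : ℕ) (hd : d ≠ 0) : omega (2*d) (d : ℤ) = -1 := by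
  unfold omega
  have h : (2 * (Real.pi:ℂ) * Complex.I * ((d:ℤ):ℂ) / ((2*d : ℕ):ℂ)) = Real.pi * Complex.I := by
    have hdc : (d : ℂ) ≠ 0 := by exact_mod_cast hd
    push_cast
    field_simp
  rw [h, Complex.exp_pi_mul_I]

lemma omega_dmul (d : ℕ) (hd : d ≠ 0) (t : ℤ) : omega (2*d) ((d:ℤ) * t) = (-1 : ℂ)^t := by
  rw [← omega_zpow, omega_d_self d hd]

lemma sum_val (d : ℕ) [NeZero d] (f : ℕ → ℂ) :
    ∑ i : ZMod d, f i.val = ∑ j ∈ Finset.range d, f j := by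
  obtain ⟨k, rfl⟩ := Nat.exists_eq_succ_of_ne_zero (NeZero.ne d)
  exact Fin.sum_univ_eq_sum_range f (k+1)

lemma omega_eq_one_iff (d : ℕ) (hd : d ≠ 0) (c : ℤ) :
    omega d c = 1 ↔ (d:ℤ) ∣ c := by
  constructor
  · intro h
    unfold omega at h
    rw [Complex.exp_eq_one_iff] at h
    obtain ⟨t, ht⟩ := h
    have hdc : (d : ℂ) ≠ 0 := by exact_mod_cast hd
    have hI : (Complex.I : ℂ) ≠ 0 := Complex.I_ne_zero
    have hpi : (Real.pi : ℂ) ≠ 0 := by exact_mod_cast Real.pi_ne_zero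
    refine ⟨t, ?_⟩
    have h2 : (2:ℂ) * Real.pi * Complex.I ≠ 0 :=
      mul_ne_zero (mul_ne_zero two_ne_zero hpi) hI
    have hcd : ((c:ℂ)/d) * (2 * Real.pi * Complex.I) = t * (2 * Real.pi * Complex.I) := by
      rw [← ht]; ring
    have hcd2 : (c:ℂ)/d = t := mul_right_cancel₀ h2 hcd
    have : (c : ℂ) = (t : ℂ) * d := by
      field_simp at hcd2; exact hcd2.trans (mul_comm _ _)
    have : c = t * d := by exact_mod_cast this
    linarith [this]
  · rintro ⟨t, rfl⟩
    exact omega_nmul d t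

lemma sum_omega (d : ℕ) [NeZero d] (c : ℤ) :
    ∑ i : ZMod d, omega d (c * (i.val:ℤ)) = if (d:ℤ) ∣ c then (d:ℂ) else 0 := by
  have hd := NeZero.ne d
  rw [sum_val d (fun j => omega d (c * (j:ℤ)))]
  have hterm : ∀ j : ℕ, omega d (c * (j:ℤ)) = (omega d c)^j := fun j => (omega_pow d c j).symm
  simp_rw [hterm]
  by_cases hdvd : (d:ℤ) ∣ c
  · rw [if_pos hdvd]
    have h1 : omega d c = 1 := (omega_eq_one_iff d hd c).2 hdvd
    simp [h1]
  · rw [if_neg hdvd]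
    have h1 : omega d c ≠ 1 := fun h => hdvd ((omega_eq_one_iff d hd c).1 h)
    rw [geom_sum_eq h1]
    have hD : (omega d c)^d = 1 := by
      rw [omega_pow]
      exact (omega_eq_one_iff d hd _).2 ⟨c, by ring⟩
    rw [hD]
    simp

lemma omega_sub_dvd {n : ℕ} {a b : ℤ} (h : (n:ℤ) ∣ (a - b)) : omega n a = omega n b := by
  obtain ⟨t, ht⟩ := h
  have ha : a = b + (n:ℤ) * t := by linarith
  rw [ha, omega_add, omega_nmul, mul_one]

lemma omega_neg_one {d : ℕ} (hd : d ≠ 0) {c : ℤ} (h1 : (d:ℤ) ∣ c)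
    (h2 : ¬ (((2*d : ℕ):ℤ) ∣ c)) : omega (2*d) c = -1 := by
  obtain ⟨s, rfl⟩ := h1
  rcases Int.even_or_odd s with ⟨u, hu⟩ | ⟨u, hu⟩
  · exact absurd ⟨u, by push_cast [hu]; ring⟩ h2
  · have : (d:ℤ) * s = ((2*d : ℕ):ℤ) * u + d := by push_cast [hu]; ring
    rw [this, omega_add, omega_nmul, one_mul, omega_d_self d hd]

lemma neg_one_zpow_congr {x y : ℤ} (h : (2:ℤ) ∣ (x - y)) : (-1 : ℂ)^x = (-1 : ℂ)^y := by
  obtain ⟨t, ht⟩ := h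
  have hx : x = y + 2*t := by linarith
  rw [hx, zpow_add₀ (by norm_num : (-1:ℂ) ≠ 0), _root_.zpow_mul]
  norm_num

/-! ### ZMod val congruences -/

lemma val_add_dvd (d : ℕ) [NeZero d] (x y : ZMod d) :
    (d:ℤ) ∣ ((x.val:ℤ) + (y.val:ℤ) - (((x+y).val:ℤ))) := by
  refine ⟨((x.val + y.val)/d : ℕ), ?_⟩
  have h := ZMod.val_add x y
  have h2 := Nat.mod_add_div (x.val + y.val) d
  push_cast [h]
  push_cast at h2
  linarith

lemma cond_dvd {d : ℕ} [NeZero d] {i j : ZMod d} {a : ℤ} (h : i + j = (a : ZMod d)) :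
    (d:ℤ) ∣ ((i.val:ℤ) + (j.val:ℤ) - a) := by
  rw [← ZMod.intCast_zmod_eq_zero_iff_dvd]
  push_cast
  simp only [ZMod.natCast_val, ZMod.cast_id]
  rw [h]
  ring

lemma dvd_sub_valIntCast (n : ℕ) [NeZero n] (a : ℤ) :
    (n:ℤ) ∣ a - (((a : ZMod n)).val : ℤ) := by
  rw [← ZMod.intCast_zmod_eq_zero_iff_dvd]
  push_cast
  simp only [ZMod.natCast_val, ZMod.cast_id]
  ring

/-! ### entry formulas -/

lemma ZX_apply (d : ℕ) [NeZero d] (k1 k2 : ℤ) (i j : ZMod d) :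
    (Zpow d k2 * Xpow d k1) i j
      = if i = j + (k1 : ZMod d) then omega d (k2 * (i.val : ℤ)) else 0 := by
  rw [Matrix.mul_apply]
  simp only [Zpow, Xpow, Matrix.of_apply, ite_mul, one_mul, zero_mul, mul_ite, mul_zero,
    mul_one]
  rw [Finset.sum_ite_eq' Finset.univ (j + (k1 : ZMod d)) (fun t => if i = t then omega d (k2 * (t.val:ℤ)) else 0)]
  simp only [Finset.mem_univ, if_true]
  by_cases h : i = j + (k1 : ZMod d)
  · rw [if_pos h, ← h, if_pos rfl]
  · rw [if_neg h, if_neg h]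

lemma mul_R_apply (d : ℕ) [NeZero d] (M : Matrix (ZMod d) (ZMod d) ℂ) (i j : ZMod d) :
    (M * R d) i j = M i (-j) := by
  rw [Matrix.mul_apply]
  simp only [R, Matrix.of_apply, mul_ite, mul_one, mul_zero]
  rw [Finset.sum_ite_eq' Finset.univ (-j) (fun t => M i t)]
  simp

lemma A_apply (d : ℕ) [NeZero d] (m : ZMod (2*d) × ZMod (2*d)) (i j : ZMod d) :
    A d m i j = if i + j = ((m.1.val : ℤ) : ZMod d)
      then omega (2*d) ((m.2.val : ℤ) * (2*(i.val:ℤ) - (m.1.val:ℤ))) else 0 := by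
  rw [A, V, mul_R_apply, Vint, Matrix.smul_apply, ZX_apply]
  have hcond : (i = -j + ((m.1.val:ℤ) : ZMod d)) ↔ (i + j = ((m.1.val:ℤ) : ZMod d)) := by
    constructor
    · intro h; rw [h]; ring
    · intro h; rw [← h]; ring
  rw [smul_eq_mul, mul_ite, mul_zero, if_congr hcond rfl rfl]
  congr 1
  rw [omega_two_mul d, ← omega_add]
  congr 1
  ring

lemma A_herm (d : ℕ) [NeZero d] (m : ZMod (2*d) × ZMod (2*d)) : (A d m)ᴴ = A d m := by
  ext i j
  rw [Matrix.conjTranspose_apply, A_apply, A_apply]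
  by_cases h : i + j = ((m.1.val:ℤ) : ZMod d)
  · have h' : j + i = ((m.1.val:ℤ) : ZMod d) := by rwa [add_comm]
    rw [if_pos h', if_pos h, show (star : ℂ → ℂ) = (starRingEnd ℂ) from rfl, star_omega]
    apply omega_sub_dvd
    obtain ⟨s, hs⟩ := cond_dvd h
    refine ⟨-((m.2.val:ℤ) * s), ?_⟩
    push_cast at hs ⊢
    linear_combination (-2 * ((m.2.val:ℕ):ℤ)) * hs
  · have h' : ¬ (j + i = ((m.1.val:ℤ) : ZMod d)) := fun hh => h (by rwa [add_comm])
    rw [if_neg h', if_neg h, star_zero]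

lemma trace_AA (d : ℕ) [NeZero d] (m n : ZMod (2*d) × ZMod (2*d)) :
    (A d m * A d n).trace =
      if ((m.1.val:ℤ) : ZMod d) = ((n.1.val:ℤ) : ZMod d) then
        omega (2*d) (2*(n.2.val:ℤ)*(((((m.1.val:ℤ) : ZMod d)).val:ℤ))
            - (m.2.val:ℤ)*(m.1.val:ℤ) - (n.2.val:ℤ)*(n.1.val:ℤ)) *
          (if (d:ℤ) ∣ ((m.2.val:ℤ) - (n.2.val:ℤ)) then (d:ℂ) else 0)
      else 0 := by
  set μ : ZMod d := ((m.1.val:ℤ) : ZMod d) with hμ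
  set ν : ZMod d := ((n.1.val:ℤ) : ZMod d) with hν
  have htr : (A d m * A d n).trace = ∑ i : ZMod d, ∑ j : ZMod d, A d m i j * A d n j i := by
    simp [Matrix.trace, Matrix.diag, Matrix.mul_apply]
  rw [htr]
  have inner : ∀ i : ZMod d, (∑ j : ZMod d, A d m i j * A d n j i)
      = if μ = ν then
          omega (2*d) ((m.2.val:ℤ) * (2*(i.val:ℤ) - (m.1.val:ℤ)))
            * omega (2*d) ((n.2.val:ℤ) * (2*(((μ - i).val:ℤ)) - (n.1.val:ℤ)))
        else 0 := by
    intro i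
    rw [Finset.sum_eq_single (μ - i)]
    · have h1 : i + (μ - i) = μ := by ring
      have h2 : (μ - i) + i = μ := by ring
      rw [A_apply, A_apply]
      simp only [h1, h2, ← hμ, ← hν, if_pos rfl]
      by_cases hc : μ = ν
      · simp [hc]
      · simp [hc]
    · intro j _ hj
      have hne : ¬ (i + j = μ) := fun h => hj (by rw [← h]; ring)
      rw [A_apply]
      simp only [← hμ, if_neg hne, zero_mul]
    · intro h; exact absurd (Finset.mem_univ _) h
  simp only [inner]
  by_cases hc : μ = ν
  · simp only [if_pos hc]
    have key : ∀ i : ZMod d,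
        omega (2*d) ((m.2.val:ℤ) * (2*(i.val:ℤ) - (m.1.val:ℤ)))
          * omega (2*d) ((n.2.val:ℤ) * (2*(((μ - i).val:ℤ)) - (n.1.val:ℤ)))
        = omega (2*d) (2*(n.2.val:ℤ)*((μ.val:ℤ))
            - (m.2.val:ℤ)*(m.1.val:ℤ) - (n.2.val:ℤ)*(n.1.val:ℤ))
          * omega d (((m.2.val:ℤ) - (n.2.val:ℤ)) * (i.val:ℤ)) := by
      intro i
      rw [omega_two_mul d ((((m.2.val:ℤ)) - (n.2.val:ℤ)) * (i.val:ℤ)), ← omega_add, ← omega_add]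
      apply omega_sub_dvd
      obtain ⟨s, hs⟩ := val_add_dvd d (μ - i) i
      have hsum : (μ - i) + i = μ := by ring
      rw [hsum] at hs
      refine ⟨(n.2.val:ℤ) * s, ?_⟩
      push_cast at hs ⊢
      linear_combination (2 * ((n.2.val:ℕ):ℤ)) * hs
    simp only [key]
    rw [← Finset.mul_sum, sum_omega]
  · simp only [if_neg hc, Finset.sum_const_zero]

instance instNeZero2d (d : ℕ) [NeZero d] : NeZero (2*d) :=
  ⟨Nat.mul_ne_zero two_ne_zero (NeZero.ne d)⟩

lemma mval0 (d : ℕ) [NeZero d] (a : ZMod d) :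
    (((dbl d a + (0 : ZMod (2*d))).val : ℕ) : ℤ) = 2*((a.val:ℕ):ℤ) := by
  have ha : a.val < d := ZMod.val_lt a
  rw [add_zero, dbl, ZMod.val_natCast, Nat.mod_eq_of_lt (by omega)]
  push_cast; ring

lemma mval1 (d : ℕ) [NeZero d] (a : ZMod d) :
    (((dbl d a + (1 : ZMod (2*d))).val : ℕ) : ℤ) = 2*((a.val:ℕ):ℤ) + 1 := by
  have ha : a.val < d := ZMod.val_lt a
  rw [dbl, show (1 : ZMod (2*d)) = ((1:ℕ) : ZMod (2*d)) by push_cast; rfl,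
    ← Nat.cast_add, ZMod.val_natCast, Nat.mod_eq_of_lt (by omega)]
  push_cast; ring

lemma sum_zmod2 (f : ZMod 2 → ℂ) : ∑ x : ZMod 2, f x = f 0 + f 1 :=
  Fin.sum_univ_two f

lemma sum_b4 (f : ZMod 2 × ZMod 2 → ℂ) :
    ∑ b : ZMod 2 × ZMod 2, f b = f (0,0) + f (0,1) + f (1,0) + f (1,1) := by
  rw [Fintype.sum_prod_type]
  rw [sum_zmod2 (fun x => ∑ y : ZMod 2, f (x,y)), sum_zmod2 (fun y => f (0,y)),
    sum_zmod2 (fun y => f (1,y))]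
  ring

lemma Bcgs_herm (d : ℕ) [NeZero d] (α : ZMod d × ZMod d) : (Bcgs d α)ᴴ = Bcgs d α := by
  rw [Bcgs, Matrix.conjTranspose_smul, Matrix.conjTranspose_sum]
  simp only [A_herm]
  congr 1
  simp

lemma val_inj' {d : ℕ} [NeZero d] {x y : ZMod d} (h : x.val = y.val) : x = y := by
  have := ZMod.val_injective d (by exact h)
  exact this

lemma Bcgs_trace (d : ℕ) [NeZero d] (hd : Even d) (α : ZMod d × ZMod d) :
    (Bcgs d α).trace = 1 := by
  have hdne := NeZero.ne d
  have hdne := NeZero.ne d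
  obtain ⟨e, he⟩ := hd
  rw [Bcgs, Matrix.trace_smul, Matrix.trace_sum]
  have htr : ∀ b : ZMod 2 × ZMod 2,
      (A d (dbl d α.1 + ((b.1.val:ℕ) : ZMod (2*d)), dbl d α.2 + ((b.2.val:ℕ) : ZMod (2*d)))).trace
      = ∑ i : ZMod d, A d (dbl d α.1 + ((b.1.val:ℕ) : ZMod (2*d)), dbl d α.2 + ((b.2.val:ℕ) : ZMod (2*d))) i i := by
    intro b; rfl
  simp only [htr]
  rw [Finset.sum_comm]
  have key : ∀ i : ZMod d, (∑ b : ZMod 2 × ZMod 2,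
      A d (dbl d α.1 + ((b.1.val:ℕ) : ZMod (2*d)), dbl d α.2 + ((b.2.val:ℕ) : ZMod (2*d))) i i)
      = if i = α.1 then 2 else 0 := by
    intro i
    rw [sum_b4 (fun b => A d (dbl d α.1 + ((b.1.val:ℕ) : ZMod (2*d)), dbl d α.2 + ((b.2.val:ℕ) : ZMod (2*d))) i i)]
    simp only [A_apply, ZMod.val_zero, ZMod.val_one, Nat.cast_zero, Nat.cast_one, mval0, mval1]
    have hC1 : ¬ (i + i = (((2*((α.1.val:ℕ):ℤ) + 1) : ℤ) : ZMod d)) := by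
      intro h
      obtain ⟨s, hs⟩ := cond_dvd h
      have hev : Even ((d:ℤ) * s) := ⟨(e:ℤ)*s, by push_cast [he]; ring⟩
      rw [← hs] at hev
      obtain ⟨w, hw⟩ := hev
      omega
    by_cases hi : i = α.1
    · have hval : i.val = α.1.val := by rw [hi]
      have hC0 : i + i = (((2*((α.1.val:ℕ):ℤ)) : ℤ) : ZMod d) := by
        rw [hi]
        push_cast
        simp only [ZMod.natCast_val, ZMod.cast_id]
        ring
      rw [if_pos hC0, if_pos hC0, if_neg hC1, if_neg hC1, if_pos hi, hval]
      have e2 : (2*((α.2.val:ℕ):ℤ) + 1) * (2*((α.1.val:ℕ):ℤ) - 2*((α.1.val:ℕ):ℤ)) = 0 := by ring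
      have e3 : (2*((α.2.val:ℕ):ℤ)) * (2*((α.1.val:ℕ):ℤ) - 2*((α.1.val:ℕ):ℤ)) = 0 := by ring
      rw [e2, e3, omega_zero]
      norm_num
    · rw [if_neg hC1, if_neg hC1, if_neg hi]
      by_cases hC0 : i + i = (((2*((α.1.val:ℕ):ℤ)) : ℤ) : ZMod d)
      · obtain ⟨s, hs⟩ := cond_dvd hC0
        have hiv : i.val ≠ α.1.val := fun h => hi (val_inj' h)
        have hivlt := ZMod.val_lt i
        have halt := ZMod.val_lt α.1
        have hivlt' : ((i.val:ℕ):ℤ) < d := by exact_mod_cast hivlt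
        have halt' : ((α.1.val:ℕ):ℤ) < d := by exact_mod_cast halt
        have hiv' : ((i.val:ℕ):ℤ) ≠ ((α.1.val:ℕ):ℤ) := by exact_mod_cast hiv
        have hnd : ¬ (((2*d:ℕ):ℤ) ∣ (2*((i.val:ℕ):ℤ) - 2*((α.1.val:ℕ):ℤ))) := by
          intro hdvd2
          have h0 : (2*((i.val:ℕ):ℤ) - 2*((α.1.val:ℕ):ℤ)) = 0 := by
            refine Int.eq_zero_of_abs_lt_dvd hdvd2 ?_
            rw [abs_lt]
            push_cast
            constructor <;> omega
          omega
        have h1 : omega (2*d) ((2*((α.2.val:ℕ):ℤ)) * (2*((i.val:ℕ):ℤ) - 2*((α.1.val:ℕ):ℤ)))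
            = omega (2*d) 0 := by
          apply omega_sub_dvd
          refine ⟨((α.2.val:ℕ):ℤ) * s, ?_⟩
          push_cast at hs ⊢
          linear_combination (2*((α.2.val:ℕ):ℤ)) * hs
        have h2 : omega (2*d) ((2*((α.2.val:ℕ):ℤ) + 1) * (2*((i.val:ℕ):ℤ) - 2*((α.1.val:ℕ):ℤ)))
            = omega (2*d) (2*((i.val:ℕ):ℤ) - 2*((α.1.val:ℕ):ℤ)) := by
          apply omega_sub_dvd
          refine ⟨((α.2.val:ℕ):ℤ) * s, ?_⟩
          push_cast at hs ⊢
          linear_combination (2*((α.2.val:ℕ):ℤ)) * hs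
        have h3 : omega (2*d) (2*((i.val:ℕ):ℤ) - 2*((α.1.val:ℕ):ℤ)) = -1 := by
          refine omega_neg_one hdne ⟨s, by linarith [hs]⟩ hnd
        rw [if_pos hC0, if_pos hC0, h1, h2, h3, omega_zero]
        ring
      · rw [if_neg hC0, if_neg hC0]
        norm_num
  simp only [key]
  rw [Finset.sum_ite_eq' Finset.univ α.1 (fun _ => (2:ℂ))]
  simp

lemma dvd_of_intCast_eq {d : ℕ} [NeZero d] {a b : ℤ} (h : (a : ZMod d) = (b : ZMod d)) :
    (d:ℤ) ∣ a - b := by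
  rw [← ZMod.intCast_zmod_eq_zero_iff_dvd]
  push_cast
  rw [h]
  ring

lemma intCast_eq_of_dvd {d : ℕ} [NeZero d] {a b : ℤ} (h : (d:ℤ) ∣ a - b) :
    (a : ZMod d) = (b : ZMod d) := by
  have h0 : ((a - b : ℤ) : ZMod d) = 0 := (ZMod.intCast_zmod_eq_zero_iff_dvd _ d).2 h
  push_cast at h0
  linear_combination h0

lemma mval (d : ℕ) [NeZero d] (a : ZMod d) (b : ZMod 2) :
    (((dbl d a + ((b.val : ℕ) : ZMod (2*d))).val : ℕ) : ℤ) = 2*((a.val:ℕ):ℤ) + ((b.val:ℕ):ℤ) := by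
  have hb : b.val < 2 := ZMod.val_lt b
  have ha : a.val < d := ZMod.val_lt a
  rw [dbl, ← Nat.cast_add, ZMod.val_natCast, Nat.mod_eq_of_lt (by omega)]
  push_cast; ring

lemma neg_one_zpow_even {k : ℤ} (h : Even k) : (-1:ℂ)^k = 1 := by
  rw [neg_one_zpow_congr (x := k) (y := 0) (by obtain ⟨u,hu⟩ := h; exact ⟨u, by omega⟩)]
  simp

lemma neg_one_zpow_odd {k : ℤ} (h : Odd k) : (-1:ℂ)^k = -1 := by
  rw [neg_one_zpow_congr (x := k) (y := 1) (by obtain ⟨u,hu⟩ := h; exact ⟨u, by omega⟩)]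
  simp

lemma Tterm (d : ℕ) [NeZero d] (e : ℕ) (he : d = e + e) (α β : ZMod d × ZMod d)
    (b c : ZMod 2 × ZMod 2) (δ ε : ℤ)
    (hδ : 2*(((α.1.val:ℕ):ℤ) - ((β.1.val:ℕ):ℤ)) = (d:ℤ)*δ)
    (hε : 2*(((α.2.val:ℕ):ℤ) - ((β.2.val:ℕ):ℤ)) = (d:ℤ)*ε) :
    (A d (dbl d α.1 + ((b.1.val:ℕ) : ZMod (2*d)), dbl d α.2 + ((b.2.val:ℕ) : ZMod (2*d))) *
     A d (dbl d β.1 + ((c.1.val:ℕ) : ZMod (2*d)), dbl d β.2 + ((c.2.val:ℕ) : ZMod (2*d)))).trace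
    = if b = c then (d:ℂ) * (-1:ℂ)^(ε*((b.1.val:ℕ):ℤ) + δ*((b.2.val:ℕ):ℤ)) else 0 := by
  have hdne := NeZero.ne d
  have hd2 : 2 ≤ d := by
    rcases Nat.lt_or_ge d 2 with h | h
    · interval_cases d <;> omega
    · exact h
  have hb1 : b.1.val < 2 := ZMod.val_lt b.1
  have hb2 : b.2.val < 2 := ZMod.val_lt b.2
  have hc1 : c.1.val < 2 := ZMod.val_lt c.1
  have hc2 : c.2.val < 2 := ZMod.val_lt c.2
  rw [trace_AA]
  simp only [mval]
  by_cases hbc : b = c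
  · subst hbc
    rw [if_pos rfl]
    have hcond1 : ((2*((α.1.val:ℕ):ℤ) + ((b.1.val:ℕ):ℤ) : ℤ) : ZMod d)
        = ((2*((β.1.val:ℕ):ℤ) + ((b.1.val:ℕ):ℤ) : ℤ) : ZMod d) :=
      intCast_eq_of_dvd ⟨δ, by linarith [hδ]⟩
    rw [if_pos hcond1]
    have hcond2 : (d:ℤ) ∣ ((2*((α.2.val:ℕ):ℤ) + ((b.2.val:ℕ):ℤ)) - (2*((β.2.val:ℕ):ℤ) + ((b.2.val:ℕ):ℤ))) :=
      ⟨ε, by linarith [hε]⟩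
    rw [if_pos hcond2]
    obtain ⟨u, hu⟩ := dvd_sub_valIntCast d (2*((α.1.val:ℕ):ℤ) + ((b.1.val:ℕ):ℤ))
    have hω : omega (2*d) (2*(2*((β.2.val:ℕ):ℤ) + ((b.2.val:ℕ):ℤ))*(((((2*((α.1.val:ℕ):ℤ) + ((b.1.val:ℕ):ℤ) : ℤ) : ZMod d)).val:ℤ))
            - (2*((α.2.val:ℕ):ℤ) + ((b.2.val:ℕ):ℤ))*(2*((α.1.val:ℕ):ℤ) + ((b.1.val:ℕ):ℤ))
            - (2*((β.2.val:ℕ):ℤ) + ((b.2.val:ℕ):ℤ))*(2*((β.1.val:ℕ):ℤ) + ((b.1.val:ℕ):ℤ)))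
        = (-1:ℂ)^(ε*((b.1.val:ℕ):ℤ) + δ*((b.2.val:ℕ):ℤ)) := by
      set μv : ℤ := (((((2*((α.1.val:ℕ):ℤ) + ((b.1.val:ℕ):ℤ) : ℤ) : ZMod d)).val:ℤ)) with hμv
      set X : ℤ := δ*(2*((β.2.val:ℕ):ℤ)+((b.2.val:ℕ):ℤ)) - ε*(2*((β.1.val:ℕ):ℤ)+((b.1.val:ℕ):ℤ))
          - (d:ℤ)*ε*δ - 2*u*(2*((β.2.val:ℕ):ℤ)+((b.2.val:ℕ):ℤ)) with hX
      have hE : 2*(2*((β.2.val:ℕ):ℤ) + ((b.2.val:ℕ):ℤ))*μv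
            - (2*((α.2.val:ℕ):ℤ) + ((b.2.val:ℕ):ℤ))*(2*((α.1.val:ℕ):ℤ) + ((b.1.val:ℕ):ℤ))
            - (2*((β.2.val:ℕ):ℤ) + ((b.2.val:ℕ):ℤ))*(2*((β.1.val:ℕ):ℤ) + ((b.1.val:ℕ):ℤ))
          = (d:ℤ) * X := by
        rw [hX]
        linear_combination (-2*(2*((β.2.val:ℕ):ℤ)+((b.2.val:ℕ):ℤ)))*hu
          + ((2*((β.2.val:ℕ):ℤ)+((b.2.val:ℕ):ℤ)) - (d:ℤ)*ε)*hδ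
          + (-(2*((α.1.val:ℕ):ℤ)+((b.1.val:ℕ):ℤ)))*hε
      rw [hE, omega_dmul d hdne X]
      apply neg_one_zpow_congr
      refine ⟨δ*((β.2.val:ℕ):ℤ) - ε*((β.1.val:ℕ):ℤ) - ε*((b.1.val:ℕ):ℤ) - (e:ℤ)*ε*δ
        - u*(2*((β.2.val:ℕ):ℤ)+((b.2.val:ℕ):ℤ)), ?_⟩
      rw [hX]
      push_cast [he]
      ring
    rw [hω]
    ring
  · rw [if_neg hbc]
    have hbc' : b.1 ≠ c.1 ∨ b.2 ≠ c.2 := by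
      by_contra h
      push_neg at h
      exact hbc (Prod.ext h.1 h.2)
    rcases hbc' with h1 | h2
    · have hv : ((b.1.val:ℕ):ℤ) ≠ ((c.1.val:ℕ):ℤ) := by
        intro hv; apply h1; apply val_inj'; exact_mod_cast hv
      rw [if_neg]
      intro hcond
      have hdvd := dvd_of_intCast_eq hcond
      have hdvd2 : (d:ℤ) ∣ (((b.1.val:ℕ):ℤ) - ((c.1.val:ℕ):ℤ)) := by
        obtain ⟨t, ht⟩ := hdvd
        exact ⟨t - δ, by linarith [hδ]⟩
      have h0 : ((b.1.val:ℕ):ℤ) - ((c.1.val:ℕ):ℤ) = 0 := by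
        refine Int.eq_zero_of_abs_lt_dvd hdvd2 ?_
        rw [abs_lt]
        constructor <;> [skip; skip] <;> push_cast <;> omega
      exact hv (by linarith [h0])
    · have hv : ((b.2.val:ℕ):ℤ) ≠ ((c.2.val:ℕ):ℤ) := by
        intro hv; apply h2; apply val_inj'; exact_mod_cast hv
      by_cases hcond : ((2*((α.1.val:ℕ):ℤ) + ((b.1.val:ℕ):ℤ) : ℤ) : ZMod d)
          = ((2*((β.1.val:ℕ):ℤ) + ((c.1.val:ℕ):ℤ) : ℤ) : ZMod d)
      · rw [if_pos hcond, if_neg, mul_zero]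
        intro hdvd
        have hdvd2 : (d:ℤ) ∣ (((b.2.val:ℕ):ℤ) - ((c.2.val:ℕ):ℤ)) := by
          obtain ⟨t, ht⟩ := hdvd
          exact ⟨t - ε, by linarith [hε]⟩
        have h0 : ((b.2.val:ℕ):ℤ) - ((c.2.val:ℕ):ℤ) = 0 := by
          refine Int.eq_zero_of_abs_lt_dvd hdvd2 ?_
          rw [abs_lt]
          constructor <;> push_cast <;> omega
        exact hv (by linarith [h0])
      · rw [if_neg hcond]

lemma Bcgs_orth (d : ℕ) [NeZero d] (hd : Even d) (α β : ZMod d × ZMod d) :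
    ((Bcgs d α)ᴴ * Bcgs d β).trace = if α = β then (d:ℂ) else 0 := by
  obtain ⟨e, he⟩ := hd
  have hdne := NeZero.ne d
  have halt1 := ZMod.val_lt α.1
  have hblt1 := ZMod.val_lt β.1
  have halt2 := ZMod.val_lt α.2
  have hblt2 := ZMod.val_lt β.2
  rw [Bcgs_herm]
  rw [Bcgs, Bcgs, Matrix.smul_mul, Matrix.mul_smul, Matrix.trace_smul, Matrix.trace_smul,
    smul_eq_mul, smul_eq_mul, Finset.sum_mul_sum]
  simp only [Matrix.trace_sum]
  have hS : (∑ b : ZMod 2 × ZMod 2, ∑ c : ZMod 2 × ZMod 2,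
      (A d (dbl d α.1 + ((b.1.val:ℕ) : ZMod (2*d)), dbl d α.2 + ((b.2.val:ℕ) : ZMod (2*d))) *
       A d (dbl d β.1 + ((c.1.val:ℕ) : ZMod (2*d)), dbl d β.2 + ((c.2.val:ℕ) : ZMod (2*d)))).trace)
      = if α = β then 4*(d:ℂ) else 0 := by
    by_cases hD1 : (d:ℤ) ∣ 2*(((α.1.val:ℕ):ℤ) - ((β.1.val:ℕ):ℤ))
    · by_cases hD2 : (d:ℤ) ∣ 2*(((α.2.val:ℕ):ℤ) - ((β.2.val:ℕ):ℤ))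
      · obtain ⟨δ, hδ⟩ := hD1
        obtain ⟨ε, hε⟩ := hD2
        have hT := fun b c => Tterm d e he α β b c δ ε hδ hε
        simp only [hT]
        have hsc : ∀ b : ZMod 2 × ZMod 2, (∑ c : ZMod 2 × ZMod 2,
            if b = c then (d:ℂ) * (-1:ℂ)^(ε*((b.1.val:ℕ):ℤ) + δ*((b.2.val:ℕ):ℤ)) else 0)
            = (d:ℂ) * (-1:ℂ)^(ε*((b.1.val:ℕ):ℤ) + δ*((b.2.val:ℕ):ℤ)) := by
          intro b
          rw [Finset.sum_ite_eq Finset.univ b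
            (fun _ => (d:ℂ) * (-1:ℂ)^(ε*((b.1.val:ℕ):ℤ) + δ*((b.2.val:ℕ):ℤ)))]
          simp
        simp only [hsc]
        rw [sum_b4 (fun b => (d:ℂ) * (-1:ℂ)^(ε*((b.1.val:ℕ):ℤ) + δ*((b.2.val:ℕ):ℤ)))]
        simp only [ZMod.val_zero, ZMod.val_one, Nat.cast_zero, Nat.cast_one, mul_zero, mul_one,
          add_zero, zero_add, zpow_zero]
        by_cases hαβ : α = β
        · have hδ0 : δ = 0 := by
            have h0 : (d:ℤ) * δ = 0 := by rw [← hδ, hαβ]; ring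
            rcases mul_eq_zero.mp h0 with h | h
            · exact absurd h (by exact_mod_cast hdne)
            · exact h
          have hε0 : ε = 0 := by
            have h0 : (d:ℤ) * ε = 0 := by rw [← hε, hαβ]; ring
            rcases mul_eq_zero.mp h0 with h | h
            · exact absurd h (by exact_mod_cast hdne)
            · exact h
          rw [if_pos hαβ, hδ0, hε0]
          norm_num
          ring
        · rw [if_neg hαβ]
          have hδodd : α.1 ≠ β.1 → Odd δ := by
            intro h
            rcases Int.even_or_odd δ with ⟨v, hv⟩ | ho
            · exfalso
              have h1 : ((α.1.val:ℕ):ℤ) - ((β.1.val:ℕ):ℤ) = (d:ℤ)*v := by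
                have : 2*(((α.1.val:ℕ):ℤ) - ((β.1.val:ℕ):ℤ)) = 2*((d:ℤ)*v) := by
                  rw [hδ, hv]; ring
                linarith
              have h2 : ((α.1.val:ℕ):ℤ) - ((β.1.val:ℕ):ℤ) = 0 := by
                refine Int.eq_zero_of_abs_lt_dvd ⟨v, h1⟩ ?_
                rw [abs_lt]
                constructor <;> push_cast <;> omega
              exact h (val_inj' (by omega))
            · exact ho
          have hεodd : α.2 ≠ β.2 → Odd ε := by
            intro h
            rcases Int.even_or_odd ε with ⟨v, hv⟩ | ho
            · exfalso
              have h1 : ((α.2.val:ℕ):ℤ) - ((β.2.val:ℕ):ℤ) = (d:ℤ)*v := by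
                have : 2*(((α.2.val:ℕ):ℤ) - ((β.2.val:ℕ):ℤ)) = 2*((d:ℤ)*v) := by
                  rw [hε, hv]; ring
                linarith
              have h2 : ((α.2.val:ℕ):ℤ) - ((β.2.val:ℕ):ℤ) = 0 := by
                refine Int.eq_zero_of_abs_lt_dvd ⟨v, h1⟩ ?_
                rw [abs_lt]
                constructor <;> push_cast <;> omega
              exact h (val_inj' (by omega))
            · exact ho
          have hne : α.1 ≠ β.1 ∨ α.2 ≠ β.2 := by
            by_contra h
            push_neg at h
            exact hαβ (Prod.ext h.1 h.2)
          rw [zpow_add₀ (by norm_num : (-1:ℂ) ≠ 0)]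
          rcases hne with h | h
          · rw [neg_one_zpow_odd (hδodd h)]
            ring
          · rw [neg_one_zpow_odd (hεodd h)]
            ring
      · have hαβ : ¬ (α = β) := by
          intro h
          exact hD2 ⟨0, by rw [h]; ring⟩
        rw [if_neg hαβ]
        apply Finset.sum_eq_zero
        intro b _
        apply Finset.sum_eq_zero
        intro c _
        have hb2 : b.2.val < 2 := ZMod.val_lt b.2
        have hc2 : c.2.val < 2 := ZMod.val_lt c.2
        rw [trace_AA]
        simp only [mval]
        by_cases hcond : ((2*((α.1.val:ℕ):ℤ) + ((b.1.val:ℕ):ℤ) : ℤ) : ZMod d)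
            = ((2*((β.1.val:ℕ):ℤ) + ((c.1.val:ℕ):ℤ) : ℤ) : ZMod d)
        · rw [if_pos hcond, if_neg, mul_zero]
          rintro ⟨s, hs⟩
          have hs' : 2*(((α.2.val:ℕ):ℤ) - ((β.2.val:ℕ):ℤ)) + (((b.2.val:ℕ):ℤ) - ((c.2.val:ℕ):ℤ))
              = 2*((e:ℤ)*s) := by
            push_cast [he] at hs ⊢
            linarith
          have hbc : ((b.2.val:ℕ):ℤ) = ((c.2.val:ℕ):ℤ) := by
            have hb2' : ((b.2.val:ℕ):ℤ) < 2 := by exact_mod_cast hb2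
            have hc2' : ((c.2.val:ℕ):ℤ) < 2 := by exact_mod_cast hc2
            have hb0 : 0 ≤ ((b.2.val:ℕ):ℤ) := Int.natCast_nonneg _
            have hc0 : 0 ≤ ((c.2.val:ℕ):ℤ) := Int.natCast_nonneg _
            omega
          exact hD2 ⟨s, by rw [hbc] at hs; linarith [hs]⟩
        · rw [if_neg hcond]
    · have hαβ : ¬ (α = β) := by
        intro h
        exact hD1 ⟨0, by rw [h]; ring⟩
      rw [if_neg hαβ]
      apply Finset.sum_eq_zero
      intro b _
      apply Finset.sum_eq_zero
      intro c _
      have hb1 : b.1.val < 2 := ZMod.val_lt b.1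
      have hc1 : c.1.val < 2 := ZMod.val_lt c.1
      rw [trace_AA]
      simp only [mval]
      rw [if_neg]
      intro hcond
      obtain ⟨s, hs⟩ := dvd_of_intCast_eq hcond
      have hs' : 2*(((α.1.val:ℕ):ℤ) - ((β.1.val:ℕ):ℤ)) + (((b.1.val:ℕ):ℤ) - ((c.1.val:ℕ):ℤ))
          = 2*((e:ℤ)*s) := by
        push_cast [he] at hs ⊢
        linarith
      have hbc : ((b.1.val:ℕ):ℤ) = ((c.1.val:ℕ):ℤ) := by
        have hb1' : ((b.1.val:ℕ):ℤ) < 2 := by exact_mod_cast hb1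
        have hc1' : ((c.1.val:ℕ):ℤ) < 2 := by exact_mod_cast hc1
        have hb0 : 0 ≤ ((b.1.val:ℕ):ℤ) := Int.natCast_nonneg _
        have hc0 : 0 ≤ ((c.1.val:ℕ):ℤ) := Int.natCast_nonneg _
        omega
      exact hD1 ⟨s, by rw [hbc] at hs; linarith [hs]⟩
  rw [hS]
  by_cases hαβ : α = β
  · rw [if_pos hαβ, if_pos hαβ]
    ring
  · rw [if_neg hαβ, if_neg hαβ]
    ring

lemma Vint_apply (d : ℕ) [NeZero d] (k : ℤ × ℤ) (i j : ZMod d) :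
    Vint d k i j = if i = j + ((k.1:ℤ) : ZMod d)
      then omega (2*d) (-(k.1*k.2) + 2*(k.2*((i.val:ℕ):ℤ))) else 0 := by
  rw [Vint, Matrix.smul_apply, ZX_apply, smul_eq_mul, mul_ite, mul_zero]
  rw [omega_two_mul d (k.2*((i.val:ℕ):ℤ)), ← omega_add]

lemma VAV (d : ℕ) [NeZero d] (k : ℤ × ℤ) (m : ZMod (2*d) × ZMod (2*d)) :
    Vint d k * A d m * (Vint d k)ᴴ
      = A d (m.1 + ((2*k.1 : ℤ) : ZMod (2*d)), m.2 + ((2*k.2 : ℤ) : ZMod (2*d))) := by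
  have hdne := NeZero.ne d
  set m1' : ZMod (2*d) := m.1 + ((2*k.1 : ℤ) : ZMod (2*d)) with hm1'
  set m2' : ZMod (2*d) := m.2 + ((2*k.2 : ℤ) : ZMod (2*d)) with hm2'
  -- congruences for the new vals
  have hval1 : ((2*d:ℕ):ℤ) ∣ (((m.1.val:ℕ):ℤ) + 2*k.1 - ((m1'.val:ℕ):ℤ)) := by
    obtain ⟨s, hs⟩ := val_add_dvd (2*d) m.1 (((2*k.1 : ℤ) : ZMod (2*d)))
    obtain ⟨t, ht⟩ := dvd_sub_valIntCast (2*d) (2*k.1)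
    rw [← hm1'] at hs
    exact ⟨s + t, by linarith [hs, ht]⟩
  have hval2 : ((2*d:ℕ):ℤ) ∣ (((m.2.val:ℕ):ℤ) + 2*k.2 - ((m2'.val:ℕ):ℤ)) := by
    obtain ⟨s, hs⟩ := val_add_dvd (2*d) m.2 (((2*k.2 : ℤ) : ZMod (2*d)))
    obtain ⟨t, ht⟩ := dvd_sub_valIntCast (2*d) (2*k.2)
    rw [← hm2'] at hs
    exact ⟨s + t, by linarith [hs, ht]⟩
  obtain ⟨s1, hs1⟩ := hval1
  obtain ⟨s2, hs2⟩ := hval2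
  push_cast at hs1 hs2
  ext i j
  rw [Matrix.mul_assoc, Matrix.mul_apply]
  -- kill the l-sum: Vint i l ≠ 0 only для l = i - k1
  rw [Finset.sum_eq_single (i - ((k.1:ℤ) : ZMod d))]
  rotate_left
  · intro l _ hl
    rw [Vint_apply, if_neg, zero_mul]
    intro hh
    exact hl (by rw [hh]; ring)
  · intro h; exact absurd (Finset.mem_univ _) h
  rw [Matrix.mul_apply]
  rw [Finset.sum_eq_single (j - ((k.1:ℤ) : ZMod d))]
  rotate_left
  · intro l _ hl
    rw [Matrix.conjTranspose_apply, Vint_apply, if_neg, star_zero, mul_zero]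
    intro hh
    exact hl (by rw [hh]; ring)
  · intro h; exact absurd (Finset.mem_univ _) h
  rw [Vint_apply, Matrix.conjTranspose_apply, Vint_apply]
  rw [if_pos (by ring : i = (i - ((k.1:ℤ) : ZMod d)) + ((k.1:ℤ) : ZMod d))]
  rw [if_pos (by ring : j = (j - ((k.1:ℤ) : ZMod d)) + ((k.1:ℤ) : ZMod d))]
  rw [show (star : ℂ → ℂ) = (starRingEnd ℂ) from rfl, star_omega]
  rw [A_apply, A_apply]
  -- identify the conditions
  have hμ' : ((((m1'.val:ℕ):ℤ)) : ZMod d) = (((m.1.val:ℕ):ℤ) : ZMod d) + 2*((k.1:ℤ) : ZMod d) := by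
    have hdvd : (d:ℤ) ∣ ((((m.1.val:ℕ):ℤ) + 2*k.1) - ((m1'.val:ℕ):ℤ)) :=
      ⟨2*s1, by push_cast; linarith [hs1]⟩
    have := intCast_eq_of_dvd hdvd
    rw [← this]
    push_cast
    ring
  have hcond : ((i - ((k.1:ℤ) : ZMod d)) + (j - ((k.1:ℤ) : ZMod d)) = (((m.1.val:ℕ):ℤ) : ZMod d))
      ↔ (i + j = ((((m1'.val:ℕ):ℤ)) : ZMod d)) := by
    rw [hμ']
    constructor
    · intro h; rw [← h]; ring
    · intro h
      have : i + j - 2*((k.1:ℤ) : ZMod d) = (((m.1.val:ℕ):ℤ) : ZMod d) := by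
        rw [h]; ring
      rw [← this]; ring
  by_cases hc : i + j = ((((m1'.val:ℕ):ℤ)) : ZMod d)
  · rw [if_pos hc, if_pos (hcond.2 hc)]
    obtain ⟨s3, hs3⟩ := cond_dvd hc
    obtain ⟨s4, hs4⟩ := dvd_sub_valIntCast d (((i.val:ℕ):ℤ) - k.1)
    have hiv : ((((i.val:ℕ):ℤ) - k.1 : ℤ) : ZMod d) = i - ((k.1:ℤ) : ZMod d) := by
      push_cast
      simp only [ZMod.natCast_val, ZMod.cast_id]
    rw [hiv] at hs4
    have hpair1 : (m1', m2').1 = m1' := rfl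
    have hpair2 : (m1', m2').2 = m2' := rfl
    rw [hpair1, hpair2, ← omega_add, ← omega_add]
    apply omega_sub_dvd
    have hw : (((i - ((k.1:ℤ) : ZMod d)).val:ℕ):ℤ) = ((i.val:ℕ):ℤ) - k.1 - (d:ℤ)*s4 := by
      linarith [hs4]
    have hj : ((j.val:ℕ):ℤ) = ((m1'.val:ℕ):ℤ) + (d:ℤ)*s3 - ((i.val:ℕ):ℤ) := by
      linarith [hs3]
    have hQ2 : ((m2'.val:ℕ):ℤ) = ((m.2.val:ℕ):ℤ) + 2*k.2 - 2*(d:ℤ)*s2 := by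
      linarith [hs2]
    have hQ1 : ((m1'.val:ℕ):ℤ) = ((m.1.val:ℕ):ℤ) + 2*k.1 - 2*(d:ℤ)*s1 := by
      linarith [hs1]
    refine ⟨-(k.2*s3) - ((m.2.val:ℕ):ℤ)*s4 - s1*((m.2.val:ℕ):ℤ) + 2*s2*((i.val:ℕ):ℤ)
      - s2*(((m.1.val:ℕ):ℤ) + 2*k.1 - 2*(d:ℤ)*s1), ?_⟩
    rw [hw, hj, hQ2, hQ1]
    push_cast
    ring
  · rw [if_neg hc, if_neg (fun hh => hc (hcond.1 hh))]
    simp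

lemma dbl_add (d : ℕ) [NeZero d] (a : ZMod d) (t : ℤ) :
    dbl d a + ((2*t : ℤ) : ZMod (2*d)) = dbl d (a + (t : ZMod d)) := by
  have h := dvd_sub_valIntCast d (((a.val:ℕ):ℤ) + t)
  have hrepr : (((((a.val:ℕ):ℤ) + t) : ℤ) : ZMod d) = a + (t : ZMod d) := by
    push_cast
    simp only [ZMod.natCast_val, ZMod.cast_id]
  rw [hrepr] at h
  obtain ⟨s, hs⟩ := h
  have key : (((2*((a.val:ℕ):ℤ) + 2*t) : ℤ) : ZMod (2*d))
      = (((2*(((a + (t : ZMod d)).val:ℕ):ℤ)) : ℤ) : ZMod (2*d)) := by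
    refine intCast_eq_of_dvd ⟨s, ?_⟩
    push_cast
    push_cast at hs
    linarith
  rw [dbl, dbl]
  push_cast
  push_cast at key
  linear_combination key

lemma Bcgs_cov (d : ℕ) [NeZero d] (k : ℤ × ℤ) (α : ZMod d × ZMod d) :
    Vint d k * Bcgs d α * (Vint d k)ᴴ
      = Bcgs d (α + (((k.1 : ℤ) : ZMod d), ((k.2 : ℤ) : ZMod d))) := by
  rw [Bcgs, Bcgs, Matrix.mul_smul, Matrix.smul_mul]
  congr 1
  rw [Matrix.mul_sum, Matrix.sum_mul]
  apply Finset.sum_congr rfl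
  intro b _
  rw [VAV]
  refine congrArg (A d) (Prod.ext ?_ ?_)
  · show (dbl d α.1 + ((b.1.val:ℕ) : ZMod (2*d))) + ((2*k.1 : ℤ) : ZMod (2*d))
      = dbl d (α + (((k.1 : ℤ) : ZMod d), ((k.2 : ℤ) : ZMod d))).1 + ((b.1.val:ℕ) : ZMod (2*d))
    rw [add_right_comm, dbl_add, Prod.fst_add]
  · show (dbl d α.2 + ((b.2.val:ℕ) : ZMod (2*d))) + ((2*k.2 : ℤ) : ZMod (2*d))
      = dbl d (α + (((k.1 : ℤ) : ZMod d), ((k.2 : ℤ) : ZMod d))).2 + ((b.2.val:ℕ) : ZMod (2*d))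
    rw [add_right_comm, dbl_add, Prod.snd_add]

end CGS

end CGSAux

theorem stmt17 (d : ℕ) [NeZero d] (hd : Even d) :
    IsValidPPOFrame d (Bcgs d) :=
  ⟨fun α => CGS.Bcgs_herm d α, fun α => CGS.Bcgs_trace d hd α,
    fun α β => CGS.Bcgs_orth d hd α β, fun k α => CGS.Bcgs_cov d k α⟩
end

section
/- Marginalisation of the coarse-grain frame: let d be even and B(α) := (1/2)·Σ_{b∈{0,1}²} A(2α + b) for α = (α1, α2) ∈ (ZMod d)². Then the vertical marginal is a position projector, (1/d)·Σ_{α2∈ZMod d} B(α1, α2) = |α1⟩⟨α1|, and the horizontal marginal is a momentum projector, (1/d)·Σ_{α1∈ZMod d} B(α1, α2) = |p_{α2}⟩⟨p_{α2}|, where |p⟩ := (1/√d)·Σ_{j∈ZMod d} ω_d^{p·j}|j⟩. -/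
open scoped BigOperators
open Matrix

section Helpers

open Finset

lemma omega_add (n : ℕ) (a b : ℤ) : omega n (a + b) = omega n a * omega n b := by
  rw [omega, omega, omega, ← Complex.exp_add]; congr 1; push_cast; ring

lemma omega_int_mul (n : ℕ) [NeZero n] (k : ℤ) : omega n (n * k) = 1 := by
  rw [omega]
  have hn : (n : ℂ) ≠ 0 := Nat.cast_ne_zero.mpr (NeZero.ne n)
  have : 2 * (Real.pi : ℂ) * Complex.I * (↑(n * k)) / n = k * (2 * Real.pi * Complex.I) := by
    push_cast; field_simp
  rw [this, Complex.exp_int_mul_two_pi_mul_I]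

lemma omega_congr (n : ℕ) [NeZero n] {a b : ℤ} (h : (a : ZMod n) = b) :
    omega n a = omega n b := by
  have : ((a - b : ℤ) : ZMod n) = 0 := by push_cast [h]; ring
  obtain ⟨k, hk⟩ := (ZMod.intCast_zmod_eq_zero_iff_dvd _ _).mp this
  have : a = b + n * k := by omega
  rw [this, omega_add, omega_int_mul, mul_one]

lemma omega_pow (n : ℕ) (c : ℤ) (m : ℕ) : omega n c ^ m = omega n (m * c) := by
  rw [omega, omega, ← Complex.exp_nat_mul]; congr 1; push_cast; ring

lemma omega_eq_one (n : ℕ) [NeZero n] {c : ℤ} (h : (c : ZMod n) = 0) : omega n c = 1 := by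
  have := omega_congr n (b := 0) (by exact_mod_cast h)
  simpa [omega] using this

lemma omega_ne_one (n : ℕ) [NeZero n] {c : ℤ} (h : (c : ZMod n) ≠ 0) : omega n c ≠ 1 := by
  intro hc
  rw [omega, Complex.exp_eq_one_iff] at hc
  obtain ⟨k, hk⟩ := hc
  apply h
  rw [ZMod.intCast_zmod_eq_zero_iff_dvd]
  refine ⟨k, ?_⟩
  have hn : (n : ℂ) ≠ 0 := Nat.cast_ne_zero.mpr (NeZero.ne n)
  have hpi : (2 * (Real.pi : ℂ) * Complex.I) ≠ 0 := by
    simp [Real.pi_ne_zero, Complex.I_ne_zero]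
  have : (c : ℂ) = (n : ℂ) * k := by
    field_simp at hk
    have h2 : (2 * (Real.pi : ℂ) * Complex.I) * (c : ℂ)
        = (2 * (Real.pi : ℂ) * Complex.I) * ((n : ℂ) * k) := by
      rw [hk]
    exact mul_left_cancel₀ hpi h2
  exact_mod_cast this

lemma omega_npow_eq_one (n : ℕ) [NeZero n] (c : ℤ) : omega n c ^ n = 1 := by
  rw [omega_pow]
  apply omega_eq_one
  push_cast
  simp

lemma omega_sum (n : ℕ) [NeZero n] (c : ℤ) :
    ∑ t : ZMod n, omega n ((t.val : ℤ) * c) = if (c : ZMod n) = 0 then (n : ℂ) else 0 := by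
  have hrw : ∀ t : ZMod n, omega n ((t.val : ℤ) * c) = omega n c ^ t.val := fun t => by
    rw [omega_pow]
  simp_rw [hrw]
  have hbij : ∑ t : ZMod n, omega n c ^ t.val = ∑ k ∈ Finset.range n, omega n c ^ k := by
    refine Finset.sum_nbij' (fun t => t.val) (fun k => (k : ZMod n)) ?_ ?_ ?_ ?_ ?_
    · intro t _; exact Finset.mem_range.mpr (ZMod.val_lt t)
    · intro k _; exact Finset.mem_univ _
    · intro t _; exact ZMod.natCast_zmod_val t
    · intro k hk; exact ZMod.val_cast_of_lt (Finset.mem_range.mp hk)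
    · intro t _; rfl
  rw [hbij]
  by_cases h : (c : ZMod n) = 0
  · rw [if_pos h]
    simp [omega_eq_one n h]
  · rw [if_neg h, geom_sum_eq (omega_ne_one n h), omega_npow_eq_one]
    simp

lemma omega_double (d : ℕ) [NeZero d] (x : ℤ) : omega d x = omega (2 * d) (2 * x) := by
  rw [omega, omega]
  congr 1
  have hd : (d : ℂ) ≠ 0 := Nat.cast_ne_zero.mpr (NeZero.ne d)
  push_cast
  field_simp

lemma omega_conj (n : ℕ) (a : ℤ) : (starRingEnd ℂ) (omega n a) = omega n (-a) := by
  rw [omega, omega, ← Complex.exp_conj]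
  congr 1
  simp [map_div₀, Complex.conj_I, Complex.conj_ofReal, map_ofNat]

lemma A_apply (d : ℕ) [NeZero d] (m : ZMod (2 * d) × ZMod (2 * d)) (i j : ZMod d) :
    A d m i j = if i + j = ((m.1.val : ℕ) : ZMod d)
      then omega (2 * d) ((m.2.val : ℤ) * (2 * (i.val : ℤ) - (m.1.val : ℤ))) else 0 := by
  have hZX : ∀ l : ZMod d, (Zpow d (m.2.val : ℤ) * Xpow d (m.1.val : ℤ)) i l
      = if i = l + (((m.1.val : ℤ)) : ZMod d) then omega d ((m.2.val : ℤ) * (i.val : ℤ)) else 0 := by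
    intro l
    rw [Matrix.mul_apply]
    simp only [Zpow, Xpow, Matrix.of_apply, ite_mul, zero_mul, mul_ite, mul_one, mul_zero]
    rw [Finset.sum_ite_eq' Finset.univ (l + (((m.1.val : ℤ)) : ZMod d))]
    simp only [Finset.mem_univ, if_true]
    split_ifs with h
    · rw [h]
    · rfl
  rw [A, V, Vint, Matrix.mul_apply]
  simp only [Matrix.smul_apply, R, Matrix.of_apply, smul_eq_mul, mul_ite, mul_one, mul_zero]
  rw [Finset.sum_ite_eq' Finset.univ (-j)]
  simp only [Finset.mem_univ, if_true, hZX]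
  have hcast : (((m.1.val : ℤ)) : ZMod d) = ((m.1.val : ℕ) : ZMod d) := by push_cast; rfl
  have h2 : (i = -j + ((m.1.val : ℕ) : ZMod d)) ↔ (i + j = ((m.1.val : ℕ) : ZMod d)) := by
    rw [eq_neg_add_iff_add_eq, add_comm j i]
  simp only [hcast, h2]
  split_ifs with h
  · rw [omega_double d, ← omega_add]
    congr 1
    ring
  · exact mul_zero _

lemma sum_of_inj (d : ℕ) [NeZero d] (g : ZMod d × ZMod 2 → ZMod (2 * d))
    (hinj : Function.Injective g) (f : ZMod (2 * d) → ℂ) :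
    ∑ p : ZMod d × ZMod 2, f (g p) = ∑ m : ZMod (2 * d), f m := by
  haveI : NeZero (2 * d) := ⟨by have := NeZero.ne d; omega⟩
  have hb : Function.Bijective g :=
    (Fintype.bijective_iff_injective_and_card g).mpr ⟨hinj, by simp [ZMod.card, mul_comm]⟩
  exact Fintype.sum_bijective g hb _ _ (fun p => rfl)

lemma val_mix1 (d : ℕ) [NeZero d] (a : ZMod d) (b : ZMod 2) :
    (dbl d a + ((b.val : ℕ) : ZMod (2 * d))).val = 2 * a.val + b.val := by
  haveI : NeZero (2 * d) := ⟨by have := NeZero.ne d; omega⟩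
  have h1 : dbl d a + ((b.val : ℕ) : ZMod (2 * d)) = ((2 * a.val + b.val : ℕ) : ZMod (2 * d)) := by
    rw [dbl, ← Nat.cast_add]
  rw [h1, ZMod.val_natCast, Nat.mod_eq_of_lt]
  have ha := ZMod.val_lt a
  have hbv := ZMod.val_lt b
  omega

lemma sum_mix1 (d : ℕ) [NeZero d] (f : ZMod (2 * d) → ℂ) :
    ∑ p : ZMod d × ZMod 2, f (dbl d p.1 + ((p.2.val : ℕ) : ZMod (2 * d)))
      = ∑ m : ZMod (2 * d), f m := by
  haveI : NeZero (2 * d) := ⟨by have := NeZero.ne d; omega⟩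
  apply sum_of_inj
  intro p q h
  have h2 := congrArg ZMod.val h
  rw [val_mix1, val_mix1] at h2
  have hp1 := ZMod.val_lt p.1
  have hp2 := ZMod.val_lt p.2
  have hq1 := ZMod.val_lt q.1
  have hq2 := ZMod.val_lt q.2
  have e1 : p.1.val = q.1.val := by omega
  have e2 : p.2.val = q.2.val := by omega
  exact Prod.ext (ZMod.val_injective _ e1) (ZMod.val_injective _ e2)

lemma val_mix2 (d : ℕ) [NeZero d] (a : ZMod d) (c : ZMod 2) :
    (((a.val + d * c.val : ℕ) : ZMod (2 * d))).val = a.val + d * c.val := by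
  haveI : NeZero (2 * d) := ⟨by have := NeZero.ne d; omega⟩
  rw [ZMod.val_natCast, Nat.mod_eq_of_lt]
  have ha := ZMod.val_lt a
  have hc : d * c.val ≤ d * 1 := Nat.mul_le_mul_left d (by have := ZMod.val_lt c; omega)
  omega

lemma sum_mix2 (d : ℕ) [NeZero d] (f : ZMod (2 * d) → ℂ) :
    ∑ p : ZMod d × ZMod 2, f ((p.1.val + d * p.2.val : ℕ) : ZMod (2 * d))
      = ∑ m : ZMod (2 * d), f m := by
  haveI : NeZero (2 * d) := ⟨by have := NeZero.ne d; omega⟩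
  apply sum_of_inj (g := fun p => ((p.1.val + d * p.2.val : ℕ) : ZMod (2 * d)))
  intro p q h
  have h2 := congrArg ZMod.val h
  simp only at h2
  rw [val_mix2, val_mix2] at h2
  have hp1 := ZMod.val_lt p.1
  have hq1 := ZMod.val_lt q.1
  have hp2 : p.2.val = 0 ∨ p.2.val = 1 := by have := ZMod.val_lt p.2; omega
  have hq2 : q.2.val = 0 ∨ q.2.val = 1 := by have := ZMod.val_lt q.2; omega
  have e : p.1.val = q.1.val ∧ p.2.val = q.2.val := by
    rcases hp2 with h0 | h0 <;> rcases hq2 with g0 | g0 <;>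
      rw [h0, g0] at h2 <;>
      simp only [Nat.mul_zero, Nat.mul_one, Nat.add_zero] at h2 <;>
      exact ⟨by omega, by omega⟩
  exact Prod.ext (ZMod.val_injective _ e.1) (ZMod.val_injective _ e.2)

lemma zmod2_sum (f : ZMod 2 → ℂ) : ∑ c : ZMod 2, f c = f 0 + f 1 := by
  rw [show (Finset.univ : Finset (ZMod 2)) = {0, 1} from by decide]
  rw [Finset.sum_insert (by decide), Finset.sum_singleton]

end Helpers

theorem stmt18 (d : ℕ) [NeZero d] (hd : Even d) :
    (∀ α1 : ZMod d, (1 / (d : ℂ)) • ∑ α2 : ZMod d, Bcgs d (α1, α2)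
        = Matrix.single α1 α1 (1 : ℂ)) ∧
    (∀ α2 : ZMod d, (1 / (d : ℂ)) • ∑ α1 : ZMod d, Bcgs d (α1, α2)
        = Matrix.vecMulVec (pvec d α2) (fun j => (starRingEnd ℂ) (pvec d α2 j))) := by
  haveI h2d : NeZero (2 * d) := ⟨by have := NeZero.ne d; omega⟩
  have hd0 : (d : ℂ) ≠ 0 := Nat.cast_ne_zero.mpr (NeZero.ne d)
  -- inner m2-sum formula
  have step1 : ∀ (i j : ZMod d) (M1 : ZMod (2 * d)), ∑ m2 : ZMod (2 * d), A d (M1, m2) i j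
      = if i + j = ((M1.val : ℕ) : ZMod d)
        then (if ((2 * (i.val : ℤ) - (M1.val : ℤ) : ℤ) : ZMod (2 * d)) = 0
          then ((2 * d : ℕ) : ℂ) else 0)
        else 0 := by
    intro i j M1
    simp_rw [A_apply]
    by_cases h : i + j = ((M1.val : ℕ) : ZMod d)
    · simp only [if_pos h]
      rw [omega_sum (2 * d) (2 * (i.val : ℤ) - (M1.val : ℤ))]
    · simp only [if_neg h, Finset.sum_const_zero]
  constructor
  · -- vertical marginal
    intro α1
    ext i j
    simp only [Matrix.smul_apply, Matrix.sum_apply, Bcgs, smul_eq_mul]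
    have key : ∑ α2 : ZMod d, ∑ b : ZMod 2 × ZMod 2,
        A d (dbl d α1 + ((b.1.val : ℕ) : ZMod (2 * d)),
             dbl d α2 + ((b.2.val : ℕ) : ZMod (2 * d))) i j
        = if α1 = i ∧ α1 = j then 2 * (d : ℂ) else 0 := by
      have reorder : ∑ α2 : ZMod d, ∑ b : ZMod 2 × ZMod 2,
          A d (dbl d α1 + ((b.1.val : ℕ) : ZMod (2 * d)),
               dbl d α2 + ((b.2.val : ℕ) : ZMod (2 * d))) i j
          = ∑ b1 : ZMod 2, ∑ p : ZMod d × ZMod 2,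
            A d (dbl d α1 + ((b1.val : ℕ) : ZMod (2 * d)),
                 dbl d p.1 + ((p.2.val : ℕ) : ZMod (2 * d))) i j := by
        simp_rw [Fintype.sum_prod_type]
        rw [Finset.sum_comm]
      rw [reorder]
      have inner : ∀ b1 : ZMod 2, ∑ p : ZMod d × ZMod 2,
          A d (dbl d α1 + ((b1.val : ℕ) : ZMod (2 * d)),
               dbl d p.1 + ((p.2.val : ℕ) : ZMod (2 * d))) i j
          = ∑ m2 : ZMod (2 * d), A d (dbl d α1 + ((b1.val : ℕ) : ZMod (2 * d)), m2) i j :=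
        fun b1 => sum_mix1 d
          (fun m2 => A d (dbl d α1 + ((b1.val : ℕ) : ZMod (2 * d)), m2) i j)
      simp_rw [inner, step1, val_mix1]
      rw [zmod2_sum]
      have hval0 : ((0 : ZMod 2)).val = 0 := rfl
      have hval1 : ((1 : ZMod 2)).val = 1 := rfl
      rw [hval0, hval1]
      have hT1 : ¬ (((2 * (i.val : ℤ) - ((2 * α1.val + 1 : ℕ) : ℤ) : ℤ) : ZMod (2 * d)) = 0) := by
        intro hcon
        rw [ZMod.intCast_zmod_eq_zero_iff_dvd] at hcon
        have h2 : (2 : ℤ) ∣ (2 * (i.val : ℤ) - ((2 * α1.val + 1 : ℕ) : ℤ)) :=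
          dvd_trans ⟨(d : ℤ), by push_cast; ring⟩ hcon
        obtain ⟨k, hk⟩ := h2
        push_cast at hk
        omega
      rw [if_neg hT1]
      have hinner0 : (((2 * (i.val : ℤ) - ((2 * α1.val + 0 : ℕ) : ℤ) : ℤ) : ZMod (2 * d)) = 0)
          ↔ i = α1 := by
        constructor
        · intro hcon
          rw [ZMod.intCast_zmod_eq_zero_iff_dvd] at hcon
          have hiv : (i.val : ℤ) < d := by exact_mod_cast ZMod.val_lt i
          have hav : (α1.val : ℤ) < d := by exact_mod_cast ZMod.val_lt α1
          have hz := Int.eq_zero_of_abs_lt_dvd hcon (by rw [abs_lt]; push_cast; omega)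
          push_cast at hz
          have : i.val = α1.val := by omega
          exact ZMod.val_injective _ this
        · intro hcon
          subst hcon
          push_cast
          ring_nf
      have houter0 : ((2 * α1.val + 0 : ℕ) : ZMod d) = α1 + α1 := by
        push_cast [ZMod.natCast_zmod_val]
        ring
      rw [houter0]
      by_cases hi : i = α1
      · by_cases hj : j = α1
        · subst hi; subst hj
          rw [if_pos rfl, if_pos (hinner0.mpr rfl)]
          simp only [ite_self, add_zero]
          push_cast
          simp [mul_comm]
        · have hne : ¬ (i + j = α1 + α1) := by
            subst hi
            intro hcon
            exact hj (by exact add_left_cancel hcon)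
          rw [if_neg hne,
            if_neg (show ¬(α1 = i ∧ α1 = j) from fun hc => hj hc.2.symm)]
          simp
      · have : ¬ (((2 * (i.val : ℤ) - ((2 * α1.val + 0 : ℕ) : ℤ) : ℤ) : ZMod (2 * d)) = 0) := by
          intro hcon; exact hi (hinner0.mp hcon)
        rw [if_neg this,
          if_neg (show ¬(α1 = i ∧ α1 = j) from fun hc => hi hc.1.symm)]
        simp
    rw [← Finset.mul_sum, key]
    simp only [Matrix.single, Matrix.of_apply]
    split_ifs with h
    · field_simp
    · simp
  · -- horizontal marginal
    intro α2
    ext i j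
    simp only [Matrix.smul_apply, Matrix.sum_apply, Bcgs, smul_eq_mul]
    have homega_neg_d : omega (2 * d) (-(d : ℤ)) = -1 := by
      have h1 : omega (2 * d) (d : ℤ) = -1 := by
        rw [omega]
        have harg : 2 * (Real.pi : ℂ) * Complex.I * ((d : ℤ) : ℂ) / ((2 * d : ℕ) : ℂ)
            = Real.pi * Complex.I := by
          push_cast
          field_simp
        rw [harg, Complex.exp_pi_mul_I]
      have h2 : omega (2 * d) (-(d : ℤ)) * omega (2 * d) (d : ℤ) = 1 := by
        rw [← omega_add]
        simp [omega]
      rw [h1] at h2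
      linear_combination -h2
    have step2 : ∀ M2 : ZMod (2 * d), ∑ m1 : ZMod (2 * d), A d (m1, M2) i j
        = omega (2 * d) ((M2.val : ℤ) * (2 * (i.val : ℤ) - ((i + j).val : ℤ)))
          * (1 + omega (2 * d) (-((M2.val : ℤ) * (d : ℤ)))) := by
      intro M2
      simp_rw [A_apply]
      rw [← sum_mix2 d (fun m1 => if i + j = ((m1.val : ℕ) : ZMod d)
        then omega (2 * d) ((M2.val : ℤ) * (2 * (i.val : ℤ) - (m1.val : ℤ))) else 0)]
      simp only [val_mix2]
      have hcond : ∀ p : ZMod d × ZMod 2,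
          ((p.1.val + d * p.2.val : ℕ) : ZMod d) = p.1 := by
        intro p
        push_cast [ZMod.natCast_zmod_val, ZMod.natCast_self]
        ring
      simp only [hcond]
      rw [Fintype.sum_prod_type, Finset.sum_comm]
      simp_rw [Finset.sum_ite_eq]
      simp only [Finset.mem_univ, if_true]
      rw [zmod2_sum]
      have hv0 : ((0 : ZMod 2)).val = 0 := rfl
      have hv1 : ((1 : ZMod 2)).val = 1 := rfl
      rw [hv0, hv1]
      have ht1 : omega (2 * d) ((M2.val : ℤ) * (2 * (i.val : ℤ) - (((i + j).val + d * 1 : ℕ) : ℤ)))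
          = omega (2 * d) ((M2.val : ℤ) * (2 * (i.val : ℤ) - ((i + j).val : ℤ)))
            * omega (2 * d) (-((M2.val : ℤ) * (d : ℤ))) := by
        rw [← omega_add]
        congr 1
        push_cast
        ring
      have ht0 : (2 * (i.val : ℤ) - (((i + j).val + d * 0 : ℕ) : ℤ))
          = (2 * (i.val : ℤ) - ((i + j).val : ℤ)) := by push_cast; ring
      rw [ht0, ht1]
      ring
    have key : ∑ α1 : ZMod d, ∑ b : ZMod 2 × ZMod 2,
        A d (dbl d α1 + ((b.1.val : ℕ) : ZMod (2 * d)),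
             dbl d α2 + ((b.2.val : ℕ) : ZMod (2 * d))) i j
        = 2 * omega d ((α2.val : ℤ) * ((i.val : ℤ) - (j.val : ℤ))) := by
      have e : (ZMod d × (ZMod 2 × ZMod 2)) ≃ (ZMod 2 × (ZMod d × ZMod 2)) :=
        ⟨fun x => (x.2.2, (x.1, x.2.1)), fun y => (y.2.1, (y.2.2, y.1)),
          fun _ => rfl, fun _ => rfl⟩
      have reorder : ∑ α1 : ZMod d, ∑ b : ZMod 2 × ZMod 2,
          A d (dbl d α1 + ((b.1.val : ℕ) : ZMod (2 * d)),
               dbl d α2 + ((b.2.val : ℕ) : ZMod (2 * d))) i j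
          = ∑ b2 : ZMod 2, ∑ p : ZMod d × ZMod 2,
            A d (dbl d p.1 + ((p.2.val : ℕ) : ZMod (2 * d)),
                 dbl d α2 + ((b2.val : ℕ) : ZMod (2 * d))) i j := by
        simp_rw [Fintype.sum_prod_type]
        have swap1 : ∀ α1 : ZMod d, (∑ b1 : ZMod 2, ∑ b2 : ZMod 2,
            A d (dbl d α1 + ((b1.val : ℕ) : ZMod (2 * d)),
                 dbl d α2 + ((b2.val : ℕ) : ZMod (2 * d))) i j)
            = ∑ b2 : ZMod 2, ∑ b1 : ZMod 2,
            A d (dbl d α1 + ((b1.val : ℕ) : ZMod (2 * d)),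
                 dbl d α2 + ((b2.val : ℕ) : ZMod (2 * d))) i j :=
          fun _ => Finset.sum_comm
        simp_rw [swap1]
        rw [Finset.sum_comm]
      rw [reorder]
      have inner : ∀ b2 : ZMod 2, ∑ p : ZMod d × ZMod 2,
          A d (dbl d p.1 + ((p.2.val : ℕ) : ZMod (2 * d)),
               dbl d α2 + ((b2.val : ℕ) : ZMod (2 * d))) i j
          = ∑ m1 : ZMod (2 * d),
            A d (m1, dbl d α2 + ((b2.val : ℕ) : ZMod (2 * d))) i j :=
        fun b2 => sum_mix1 d
          (fun m1 => A d (m1, dbl d α2 + ((b2.val : ℕ) : ZMod (2 * d))) i j)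
      simp_rw [inner, step2, val_mix1]
      rw [zmod2_sum]
      have hv0 : ((0 : ZMod 2)).val = 0 := rfl
      have hv1 : ((1 : ZMod 2)).val = 1 := rfl
      rw [hv0, hv1]
      have hb0 : omega (2 * d) (-(((2 * α2.val + 0 : ℕ) : ℤ) * (d : ℤ))) = 1 := by
        have harg : (-(((2 * α2.val + 0 : ℕ) : ℤ) * (d : ℤ)))
            = ((2 * d : ℕ) : ℤ) * (-(α2.val : ℤ)) := by
          simp only [Nat.cast_add, Nat.cast_mul, Nat.cast_ofNat, Nat.cast_zero]
          ring
        rw [harg, omega_int_mul]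
      have hb1 : omega (2 * d) (-(((2 * α2.val + 1 : ℕ) : ℤ) * (d : ℤ))) = -1 := by
        have harg : (-(((2 * α2.val + 1 : ℕ) : ℤ) * (d : ℤ)))
            = -(d : ℤ) + ((2 * d : ℕ) : ℤ) * (-(α2.val : ℤ)) := by
          simp only [Nat.cast_add, Nat.cast_mul, Nat.cast_ofNat, Nat.cast_one]
          ring
        rw [harg, omega_add, homega_neg_d, omega_int_mul]
        ring
      rw [hb0, hb1]
      have harg : omega (2 * d) (((2 * α2.val + 0 : ℕ) : ℤ) * (2 * (i.val : ℤ) - ((i + j).val : ℤ)))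
          = omega d ((α2.val : ℤ) * ((i.val : ℤ) - (j.val : ℤ))) := by
        rw [omega_double d ((α2.val : ℤ) * ((i.val : ℤ) - (j.val : ℤ)))]
        apply omega_congr
        rw [← sub_eq_zero, ← Int.cast_sub, ZMod.intCast_zmod_eq_zero_iff_dvd]
        refine ⟨(α2.val : ℤ) * (((i.val + j.val) / d : ℕ) : ℤ), ?_⟩
        have hmod : d * ((i.val + j.val) / d) + (i.val + j.val) % d = i.val + j.val :=
          Nat.div_add_mod _ _
        have hs : (i + j).val = (i.val + j.val) % d := ZMod.val_add i j
        have hsZ : (((i + j).val : ℕ) : ℤ)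
            = (i.val : ℤ) + (j.val : ℤ) - (d : ℤ) * (((i.val + j.val) / d : ℕ) : ℤ) := by
          omega
        rw [hsZ]
        simp only [Nat.cast_add, Nat.cast_mul, Nat.cast_ofNat, Nat.cast_zero]
        ring
      rw [harg]
      ring
    rw [← Finset.mul_sum, key]
    simp only [Matrix.vecMulVec_apply, pvec, _root_.map_mul, omega_conj, map_div₀,
      _root_.map_one, Complex.conj_ofReal]
    have hsq : ((Real.sqrt d : ℝ) : ℂ) * ((Real.sqrt d : ℝ) : ℂ) = (d : ℂ) := by
      rw [← Complex.ofReal_mul, Real.mul_self_sqrt (Nat.cast_nonneg d)]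
      push_cast
      rfl
    rw [mul_mul_mul_comm, ← omega_add]
    have harg2 : ((α2.val : ℤ) * (i.val : ℤ) + -((α2.val : ℤ) * (j.val : ℤ)))
        = (α2.val : ℤ) * ((i.val : ℤ) - (j.val : ℤ)) := by ring
    rw [harg2, div_mul_div_comm, one_mul, hsq]
    ring
end
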